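/- Fix w ≥ 0 and λ ∈ [0,1], with λ ∉ {0,1} if w = 0, and let W := [[0,w],[w,0]]. Let (β₁,β₂) be distributed according to ν_2^{W,0}, define γ := (4β₁β₂ − w²)/(2wλ(1−λ) + 2β₂λ² + 2β₁(1−λ)²), Z := (2β₁ − λ²γ)/(w + λ(1−λ)γ), and U := √Z − 1/√Z. Then the joint law of (γ,U), i.e. the pushforward of ν_2^{W,0} under (β₁,β₂) ↦ (γ,U), is the measure on (0,∞) × ℝ with density (c,u) ↦ [(1/√(2π)) c^{-1/2} e^{-c/2}] · [√((w + λ(1−λ)c)/(2π)) · exp(−(w + λ(1−λ)c)·u²/2) · (1 − (2λ−1)·u/√(u²+4))]. In particular, conditionally on γ = c, U is distributed according to the tilted Gaussian law Ñ(w + λ(1−λ)c, −(2λ−1)). -/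

import Mathlib

open scoped Classical

open MeasureTheory Matrix

noncomputable instance matrixMeasurableSpace {m n : Type*} :
    MeasurableSpace (Matrix m n ℝ) :=
  (inferInstance : MeasurableSpace (m → n → ℝ))

noncomputable def Hmat {n : ℕ} (W : Matrix (Fin n) (Fin n) ℝ) (β : Fin n → ℝ) :
    Matrix (Fin n) (Fin n) ℝ :=
  fun i j => if i = j then 2 * β i - W i i else - W i j

noncomputable def nuDensity {n : ℕ} (W : Matrix (Fin n) (Fin n) ℝ) (η : Fin n → ℝ)
    (β : Fin n → ℝ) : ℝ :=
  if (Hmat W β).PosDef then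
    (2 / Real.pi) ^ ((n : ℝ) / 2) *
      Real.exp (-(1/2) * ((∑ i, ∑ j, Hmat W β i j)
        + (η ⬝ᵥ ((Hmat W β)⁻¹ *ᵥ η)) - 2 * ∑ i, η i)) *
      (Real.sqrt (Hmat W β).det)⁻¹
  else 0

/-- The measure ν_n^{W,η} on ℝ^n. -/
noncomputable def nuMeasure {n : ℕ} (W : Matrix (Fin n) (Fin n) ℝ) (η : Fin n → ℝ) :
    Measure (Fin n → ℝ) :=
  volume.withDensity (fun β => ENNReal.ofReal (nuDensity W η β))

/-- The measure ν̃_n^{W,η}: pushforward of ν_n^{W,η} under β ↦ H_β. -/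
noncomputable def nuTilde {n : ℕ} (W : Matrix (Fin n) (Fin n) ℝ) (η : Fin n → ℝ) :
    Measure (Matrix (Fin n) (Fin n) ℝ) :=
  (nuMeasure W η).map (Hmat W)

/-- Indices i and j are H-connected. -/
def HConnected {n : ℕ} (H : Matrix (Fin n) (Fin n) ℝ) (i j : Fin n) : Prop :=
  Relation.ReflTransGen (fun a b => H a b ≠ 0) i j

open scoped ENNReal

/-! ### Auxiliary lemmas -/

noncomputable def sqz (u : ℝ) : ℝ := (u + Real.sqrt (u ^ 2 + 4)) / 2

lemma sqrt_sq_add_four (u : ℝ) : Real.sqrt (u ^ 2 + 4) ^ 2 = u ^ 2 + 4 :=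
  Real.sq_sqrt (by positivity)

lemma sqz_pos (u : ℝ) : 0 < sqz u := by
  have h1 : Real.sqrt (u ^ 2 + 4) ^ 2 = u ^ 2 + 4 := sqrt_sq_add_four u
  have h2 : 0 ≤ Real.sqrt (u ^ 2 + 4) := Real.sqrt_nonneg _
  unfold sqz
  nlinarith [sq_nonneg (u + Real.sqrt (u ^ 2 + 4))]

lemma sqz_sq (u : ℝ) : sqz u ^ 2 = u * sqz u + 1 := by
  have h1 : Real.sqrt (u ^ 2 + 4) ^ 2 = u ^ 2 + 4 := sqrt_sq_add_four u
  unfold sqz; nlinarith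

lemma sqz_sub_inv (u : ℝ) : sqz u - 1 / sqz u = u := by
  have h := sqz_sq u
  have hp := sqz_pos u
  field_simp
  nlinarith

lemma sqrt_add_four (t : ℝ) (ht : 0 < t) :
    Real.sqrt ((t - 1 / t) ^ 2 + 4) = t + 1 / t := by
  have : (t - 1 / t) ^ 2 + 4 = (t + 1 / t) ^ 2 := by field_simp; ring
  rw [this, Real.sqrt_sq (by positivity)]

lemma sqz_eq (t : ℝ) (ht : 0 < t) : sqz (t - 1 / t) = t := by
  unfold sqz
  rw [sqrt_add_four t ht]
  ring

lemma sqrt_u_sq_add_four (u : ℝ) : Real.sqrt (u ^ 2 + 4) = sqz u + 1 / sqz u := by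
  conv_lhs => rw [← sqz_sub_inv u]
  exact sqrt_add_four _ (sqz_pos u)

lemma hasDerivAt_sqz (u : ℝ) :
    HasDerivAt sqz (sqz u / Real.sqrt (u ^ 2 + 4)) u := by
  have h4 : (0:ℝ) < u ^ 2 + 4 := by positivity
  have hs : HasDerivAt (fun u : ℝ => u ^ 2 + 4) (2 * u) u := by
    simpa using (hasDerivAt_pow 2 u).add_const 4
  have hsq : HasDerivAt (fun u : ℝ => Real.sqrt (u ^ 2 + 4))
      (1 / (2 * Real.sqrt (u ^ 2 + 4)) * (2 * u)) u :=
    (Real.hasDerivAt_sqrt h4.ne').comp u hs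
  have h := ((hasDerivAt_id u).add hsq).div_const 2
  have hsp : 0 < Real.sqrt (u ^ 2 + 4) := Real.sqrt_pos.2 h4
  refine h.congr_deriv ?_
  unfold sqz
  field_simp
  ring

lemma Hmat_00 (w : ℝ) (β : Fin 2 → ℝ) : Hmat !![0, w; w, 0] β 0 0 = 2 * β 0 := by
  simp [Hmat]
lemma Hmat_01 (w : ℝ) (β : Fin 2 → ℝ) : Hmat !![0, w; w, 0] β 0 1 = -w := by
  simp [Hmat]
lemma Hmat_10 (w : ℝ) (β : Fin 2 → ℝ) : Hmat !![0, w; w, 0] β 1 0 = -w := by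
  simp [Hmat]
lemma Hmat_11 (w : ℝ) (β : Fin 2 → ℝ) : Hmat !![0, w; w, 0] β 1 1 = 2 * β 1 := by
  simp [Hmat]

lemma Hmat_det (w : ℝ) (β : Fin 2 → ℝ) :
    (Hmat !![0, w; w, 0] β).det = 4 * β 0 * β 1 - w ^ 2 := by
  rw [Matrix.det_fin_two, Hmat_00, Hmat_01, Hmat_10, Hmat_11]; ring

lemma Hmat_sum (w : ℝ) (β : Fin 2 → ℝ) :
    (∑ i, ∑ j, Hmat !![0, w; w, 0] β i j) = 2 * β 0 + 2 * β 1 - 2 * w := by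
  simp [Fin.sum_univ_two, Hmat_00, Hmat_01, Hmat_10, Hmat_11]; ring

lemma posDef_iff (w : ℝ) (β : Fin 2 → ℝ) :
    (Hmat !![0, w; w, 0] β).PosDef ↔ 0 < β 0 ∧ w ^ 2 < 4 * β 0 * β 1 := by
  constructor
  · intro h
    have h1 := (posDef_iff_dotProduct_mulVec.mp h).2 (x := ![1, 0]) (fun h => by simpa using congrFun h 0)
    simp [dotProduct, Matrix.mulVec, Fin.sum_univ_two, Hmat_00, Hmat_01, Hmat_10, Hmat_11] at h1
    have hb0 : 0 < β 0 := by linarith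
    refine ⟨hb0, ?_⟩
    have h2 := (posDef_iff_dotProduct_mulVec.mp h).2 (x := ![w, 2 * β 0]) (fun h => by
      have := congrFun h 1
      simp at this
      exact absurd this (by positivity))
    simp [dotProduct, Matrix.mulVec, Fin.sum_univ_two, Hmat_00, Hmat_01, Hmat_10, Hmat_11] at h2
    nlinarith
  · rintro ⟨hb, hd⟩
    rw [posDef_iff_dotProduct_mulVec]
    constructor
    · ext i j
      fin_cases i <;> fin_cases j <;>
        simp [Hmat_00, Hmat_01, Hmat_10, Hmat_11, Matrix.conjTranspose_apply]
    · intro x hx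
      have hx' : x 0 ≠ 0 ∨ x 1 ≠ 0 := by
        by_contra h
        push_neg at h
        apply hx
        ext i; fin_cases i <;> simp [h.1, h.2]
      have hval : star x ⬝ᵥ (Hmat !![0, w; w, 0] β) *ᵥ x
          = 2 * β 0 * x 0 ^ 2 - 2 * w * x 0 * x 1 + 2 * β 1 * x 1 ^ 2 := by
        simp [dotProduct, Matrix.mulVec, Fin.sum_univ_two, Hmat_00, Hmat_01, Hmat_10, Hmat_11]
        ring
      rw [hval]
      rcases hx' with h0 | h1
      · rcases eq_or_ne (x 1) 0 with h1 | h1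
        · rw [h1]; have := sq_pos_of_ne_zero h0; nlinarith
        · nlinarith [sq_nonneg (2 * β 0 * x 0 - w * x 1), sq_pos_of_ne_zero h1]
      · nlinarith [sq_nonneg (2 * β 0 * x 0 - w * x 1), sq_pos_of_ne_zero h1]

lemma nuDensity_eq (w : ℝ) (β : Fin 2 → ℝ) :
    nuDensity !![0, w; w, 0] 0 β =
      if 0 < β 0 ∧ w ^ 2 < 4 * β 0 * β 1 then
        (2 / Real.pi) * Real.exp (-(β 0 + β 1 - w)) *
          (Real.sqrt (4 * β 0 * β 1 - w ^ 2))⁻¹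
      else 0 := by
  rcases em (0 < β 0 ∧ w ^ 2 < 4 * β 0 * β 1) with h | h
  · rw [nuDensity, if_pos ((posDef_iff w β).2 h), if_pos h, Hmat_sum, Hmat_det]
    have h2 : ((2 : ℕ) : ℝ) / 2 = 1 := by norm_num
    rw [h2, Real.rpow_one]
    norm_num
    ring_nf
    tauto
  · rw [nuDensity, if_neg (fun hp => h ((posDef_iff w β).1 hp)), if_neg h]

noncomputable def Kc (w lam c : ℝ) : ℝ := w + lam * (1 - lam) * c

noncomputable def psiMap (w lam : ℝ) (p : ℝ × ℝ) : ℝ × ℝ :=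
  ((lam ^ 2 * p.1 + Kc w lam p.1 * sqz p.2 ^ 2) / 2,
   ((1 - lam) ^ 2 * p.1 + Kc w lam p.1 / sqz p.2 ^ 2) / 2)

noncomputable def Bmat (w lam : ℝ) (p : ℝ × ℝ) : ℝ × ℝ →L[ℝ] ℝ × ℝ :=
  LinearMap.toContinuousLinearMap (Matrix.toLin (Module.Basis.finTwoProd ℝ) (Module.Basis.finTwoProd ℝ)
    !![(lam ^ 2 + lam * (1 - lam) * sqz p.2 ^ 2) / 2,
       Kc w lam p.1 * sqz p.2 * (sqz p.2 / Real.sqrt (p.2 ^ 2 + 4));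
       ((1 - lam) ^ 2 + lam * (1 - lam) / sqz p.2 ^ 2) / 2,
       -(Kc w lam p.1 * (sqz p.2 / Real.sqrt (p.2 ^ 2 + 4)) / sqz p.2 ^ 3)])

lemma Bmat_det (w lam : ℝ) (p : ℝ × ℝ) :
    (Bmat w lam p).det =
      -(Kc w lam p.1 * (lam / sqz p.2 + (1 - lam) * sqz p.2) ^ 2 /
        (2 * Real.sqrt (p.2 ^ 2 + 4))) := by
  have ht := sqz_pos p.2
  have hs : (0:ℝ) < Real.sqrt (p.2 ^ 2 + 4) := Real.sqrt_pos.2 (by positivity)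
  simp only [Bmat, LinearMap.det_toContinuousLinearMap, LinearMap.det_toLin,
    Matrix.det_fin_two_of]
  field_simp
  ring

lemma hasFDerivAt_psiMap (w lam : ℝ) (p : ℝ × ℝ) :
    HasFDerivAt (psiMap w lam) (Bmat w lam p) p := by
  have ht := sqz_pos p.2
  have hs : (0:ℝ) < Real.sqrt (p.2 ^ 2 + 4) := Real.sqrt_pos.2 (by positivity)
  have hsz : HasFDerivAt (fun q : ℝ × ℝ => sqz q.2)
      ((sqz p.2 / Real.sqrt (p.2 ^ 2 + 4)) • ContinuousLinearMap.snd ℝ ℝ ℝ) p :=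
    (hasDerivAt_sqz p.2).comp_hasFDerivAt p hasFDerivAt_snd
  have hK : HasFDerivAt (fun q : ℝ × ℝ => Kc w lam q.1)
      ((lam * (1 - lam)) • ContinuousLinearMap.fst ℝ ℝ ℝ) p := by
    simpa [Kc] using ((hasFDerivAt_fst (p := p)).const_mul (lam * (1 - lam))).const_add w
  have hT2 : HasFDerivAt (fun q : ℝ × ℝ => sqz q.2 ^ 2)
      ((sqz p.2) • ((sqz p.2 / Real.sqrt (p.2 ^ 2 + 4)) • ContinuousLinearMap.snd ℝ ℝ ℝ) +
       (sqz p.2) • ((sqz p.2 / Real.sqrt (p.2 ^ 2 + 4)) • ContinuousLinearMap.snd ℝ ℝ ℝ)) p := by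
    simpa [pow_two] using hsz.fun_mul hsz
  have hc1 : HasFDerivAt (fun q : ℝ × ℝ => lam ^ 2 * q.1)
      ((lam ^ 2) • ContinuousLinearMap.fst ℝ ℝ ℝ) p :=
    (hasFDerivAt_fst (p := p)).const_mul _
  have hc2 : HasFDerivAt (fun q : ℝ × ℝ => (1 - lam) ^ 2 * q.1)
      (((1 - lam) ^ 2) • ContinuousLinearMap.fst ℝ ℝ ℝ) p :=
    (hasFDerivAt_fst (p := p)).const_mul _
  have h1 := (hc1.fun_add (hK.fun_mul hT2)).const_mul ((2:ℝ)⁻¹)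
  have hinv : HasFDerivAt (fun q : ℝ × ℝ => (sqz q.2 ^ 2)⁻¹)
      ((-(((sqz p.2 ^ 2) ^ 2)⁻¹)) •
        (sqz p.2 • (sqz p.2 / Real.sqrt (p.2 ^ 2 + 4)) • ContinuousLinearMap.snd ℝ ℝ ℝ +
         sqz p.2 • (sqz p.2 / Real.sqrt (p.2 ^ 2 + 4)) • ContinuousLinearMap.snd ℝ ℝ ℝ)) p :=
    (hasDerivAt_inv (by positivity)).comp_hasFDerivAt p hT2
  have h2 := (hc2.fun_add (hK.fun_mul hinv)).const_mul ((2:ℝ)⁻¹)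
  have hfun : psiMap w lam = (fun q : ℝ × ℝ =>
      ((2:ℝ)⁻¹ * (lam ^ 2 * q.1 + Kc w lam q.1 * sqz q.2 ^ 2),
       (2:ℝ)⁻¹ * ((1 - lam) ^ 2 * q.1 + Kc w lam q.1 * (sqz q.2 ^ 2)⁻¹))) := by
    funext q
    rw [psiMap]
    exact Prod.ext (by ring) (by ring)
  rw [hfun]
  refine (h1.prodMk h2).congr_fderiv (Eq.symm ?_)
  rw [Bmat, Matrix.toLin_finTwoProd_toContinuousLinearMap]
  refine ContinuousLinearMap.ext fun q => ?_
  refine Prod.ext ?_ ?_ <;>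
    simp only [ContinuousLinearMap.prod_apply, ContinuousLinearMap.add_apply,
      ContinuousLinearMap.smul_apply, ContinuousLinearMap.coe_fst',
      ContinuousLinearMap.coe_snd', Pi.smul_apply, smul_eq_mul] <;>
    field_simp <;> ring

section Main

variable {w lam : ℝ} (hw : 0 ≤ w) (hlam : lam ∈ Set.Icc (0 : ℝ) 1)
  (hw0 : w = 0 → lam ≠ 0 ∧ lam ≠ 1)

include hw hlam hw0 in
lemma Kc_pos (hc : 0 < (c : ℝ)) : 0 < Kc w lam c := by
  obtain ⟨hl0, hl1⟩ := hlam
  rcases eq_or_lt_of_le hw with hw' | hw'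
  · obtain ⟨h0, h1⟩ := hw0 hw'.symm
    have : 0 < lam := lt_of_le_of_ne hl0 (Ne.symm h0)
    have : 0 < 1 - lam := by
      rcases lt_or_eq_of_le hl1 with h | h
      · linarith
      · exact absurd h h1
    unfold Kc
    rw [← hw']
    nlinarith [mul_pos (mul_pos ‹0 < lam› ‹0 < 1 - lam›) hc]
  · unfold Kc
    nlinarith [mul_nonneg (mul_nonneg hl0 (by linarith : (0:ℝ) ≤ 1 - lam)) hc.le]

include hlam in
lemma a0_pos (t : ℝ) (ht : 0 < t) : 0 < lam / t + (1 - lam) * t := by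
  obtain ⟨hl0, hl1⟩ := hlam
  rcases eq_or_lt_of_le hl0 with h | h
  · rw [← h]; simp; nlinarith
  · have h1 : 0 < lam / t := div_pos h ht
    nlinarith [mul_nonneg (by linarith : (0:ℝ) ≤ 1 - lam) ht.le]

noncomputable def phiMap (w lam : ℝ) (q : ℝ × ℝ) : ℝ × ℝ :=
  (((4 * q.1 * q.2 - w ^ 2) /
      (2 * w * lam * (1 - lam) + 2 * q.2 * lam ^ 2 + 2 * q.1 * (1 - lam) ^ 2)),
   (Real.sqrt ((2 * q.1 - lam ^ 2 * ((4 * q.1 * q.2 - w ^ 2) /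
      (2 * w * lam * (1 - lam) + 2 * q.2 * lam ^ 2 + 2 * q.1 * (1 - lam) ^ 2))) /
      (w + lam * (1 - lam) * ((4 * q.1 * q.2 - w ^ 2) /
      (2 * w * lam * (1 - lam) + 2 * q.2 * lam ^ 2 + 2 * q.1 * (1 - lam) ^ 2)))) -
    1 / Real.sqrt ((2 * q.1 - lam ^ 2 * ((4 * q.1 * q.2 - w ^ 2) /
      (2 * w * lam * (1 - lam) + 2 * q.2 * lam ^ 2 + 2 * q.1 * (1 - lam) ^ 2))) /
      (w + lam * (1 - lam) * ((4 * q.1 * q.2 - w ^ 2) /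
      (2 * w * lam * (1 - lam) + 2 * q.2 * lam ^ 2 + 2 * q.1 * (1 - lam) ^ 2))))))

lemma den_eq (p : ℝ × ℝ) :
    2 * w * lam * (1 - lam) + 2 * (psiMap w lam p).2 * lam ^ 2 +
      2 * (psiMap w lam p).1 * (1 - lam) ^ 2 =
    Kc w lam p.1 * (lam / sqz p.2 + (1 - lam) * sqz p.2) ^ 2 := by
  have ht := sqz_pos p.2
  rw [psiMap]
  unfold Kc
  field_simp
  ring

lemma num_eq (p : ℝ × ℝ) :
    4 * (psiMap w lam p).1 * (psiMap w lam p).2 - w ^ 2 =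
    p.1 * (Kc w lam p.1 * (lam / sqz p.2 + (1 - lam) * sqz p.2) ^ 2) := by
  have ht := sqz_pos p.2
  rw [psiMap]
  unfold Kc
  field_simp
  ring

include hw hlam hw0 in
lemma phi_psi (p : ℝ × ℝ) (hc : 0 < p.1) :
    phiMap w lam (psiMap w lam p) = p := by
  have ht := sqz_pos p.2
  have hK := Kc_pos hw hlam hw0 (c := p.1) hc
  have ha := a0_pos hlam (sqz p.2) ht
  have hden := den_eq (w := w) (lam := lam) p
  have hnum := num_eq (w := w) (lam := lam) p
  have hDpos : 0 < Kc w lam p.1 * (lam / sqz p.2 + (1 - lam) * sqz p.2) ^ 2 := by positivity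
  rw [phiMap]
  have hgam : (4 * (psiMap w lam p).1 * (psiMap w lam p).2 - w ^ 2) /
      (2 * w * lam * (1 - lam) + 2 * (psiMap w lam p).2 * lam ^ 2 +
        2 * (psiMap w lam p).1 * (1 - lam) ^ 2) = p.1 := by
    rw [hnum, hden, mul_div_assoc, div_self hDpos.ne', mul_one]
  rw [hgam]
  have hZ : (2 * (psiMap w lam p).1 - lam ^ 2 * p.1) / (w + lam * (1 - lam) * p.1)
      = sqz p.2 ^ 2 := by
    have h1 : 2 * (psiMap w lam p).1 - lam ^ 2 * p.1 = Kc w lam p.1 * sqz p.2 ^ 2 := by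
      rw [psiMap]; ring
    rw [h1, show w + lam * (1 - lam) * p.1 = Kc w lam p.1 from rfl]
    field_simp
  rw [hZ, Real.sqrt_sq ht.le]
  exact Prod.ext rfl (sqz_sub_inv p.2)

include hw hlam hw0 in
lemma psi_mem_S (p : ℝ × ℝ) (hc : 0 < p.1) :
    0 < (psiMap w lam p).1 ∧ w ^ 2 < 4 * (psiMap w lam p).1 * (psiMap w lam p).2 := by
  have ht := sqz_pos p.2
  have hK := Kc_pos hw hlam hw0 (c := p.1) hc
  have ha := a0_pos hlam (sqz p.2) ht
  constructor
  · rw [psiMap]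
    obtain ⟨hl0, hl1⟩ := hlam
    have : 0 < Kc w lam p.1 * sqz p.2 ^ 2 := by positivity
    have h2 : 0 ≤ lam ^ 2 * p.1 := by positivity
    simp only
    linarith
  · have := num_eq (w := w) (lam := lam) p
    nlinarith [mul_pos (mul_pos hc hK) (pow_pos ha 2)]

include hw hlam hw0 in
lemma psi_surj (q : ℝ × ℝ) (hq : 0 < q.1 ∧ w ^ 2 < 4 * q.1 * q.2) :
    ∃ p : ℝ × ℝ, 0 < p.1 ∧ psiMap w lam p = q := by
  obtain ⟨hb1, hdet⟩ := hq
  obtain ⟨hl0, hl1⟩ := hlam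
  have hb2 : 0 < q.2 := by nlinarith [sq_nonneg w]
  set D := 2 * w * lam * (1 - lam) + 2 * q.2 * lam ^ 2 + 2 * q.1 * (1 - lam) ^ 2 with hD
  have hD0 : 0 < D := by
    rcases eq_or_lt_of_le hl0 with h | h
    · rw [hD, ← h]; norm_num; nlinarith
    · have h1 : 0 < 2 * q.2 * lam ^ 2 := by positivity
      have h2 : 0 ≤ 2 * q.1 * (1 - lam) ^ 2 := by positivity
      have h3 : 0 ≤ 2 * w * lam * (1 - lam) :=
        mul_nonneg (mul_nonneg (by linarith) hl0) (by linarith)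
      linarith
  set c := (4 * q.1 * q.2 - w ^ 2) / D with hc'
  have hc : 0 < c := div_pos (by nlinarith) hD0
  have hK : 0 < Kc w lam c := Kc_pos hw ⟨hl0, hl1⟩ hw0 hc
  have hcD : c * D = 4 * q.1 * q.2 - w ^ 2 := div_mul_cancel₀ _ hD0.ne'
  have hbase : 0 < lam * w + (1 - lam) * (2 * q.1) := by
    rcases eq_or_lt_of_le hl1 with h | h
    · have hwpos : 0 < w := by
        rcases eq_or_lt_of_le hw with h' | h'
        · exact absurd h (hw0 h'.symm).2
        · exact h'
      rw [h]; norm_num; exact hwpos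
    · nlinarith [mul_pos (by linarith : (0:ℝ) < 1 - lam) hb1, mul_nonneg hl0 hw]
  have hsq : (2 * q.1 - lam ^ 2 * c) * D = (lam * w + (1 - lam) * (2 * q.1)) ^ 2 := by
    have h' : (2 * q.1 - lam ^ 2 * c) * D = 2 * q.1 * D - lam ^ 2 * (c * D) := by ring
    rw [h', hcD, hD]; ring
  have hX : 0 < 2 * q.1 - lam ^ 2 * c := by nlinarith [pow_pos hbase 2]
  set Z := (2 * q.1 - lam ^ 2 * c) / Kc w lam c with hZ'
  have hZ : 0 < Z := div_pos hX hK
  set t := Real.sqrt Z with ht'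
  have ht : 0 < t := Real.sqrt_pos.2 hZ
  have ht2 : t ^ 2 = Z := Real.sq_sqrt hZ.le
  clear_value D c Z t
  refine ⟨(c, t - 1 / t), hc, ?_⟩
  have hszt : sqz (t - 1 / t) = t := sqz_eq t ht
  have hKt : Kc w lam c * t ^ 2 = 2 * q.1 - lam ^ 2 * c := by
    rw [ht2, hZ']; field_simp
  have hXY : (2 * q.1 - lam ^ 2 * c) * (2 * q.2 - (1 - lam) ^ 2 * c) = Kc w lam c ^ 2 := by
    simp only [Kc]
    linear_combination (-1 : ℝ) * hcD + c * hD
  have hKdiv : Kc w lam c / t ^ 2 = 2 * q.2 - (1 - lam) ^ 2 * c := by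
    rw [ht2, hZ', div_div_eq_mul_div, div_eq_iff hX.ne']
    linear_combination -hXY
  rw [psiMap]
  simp only [hszt]
  refine Prod.ext ?_ ?_
  · show (lam ^ 2 * c + Kc w lam c * t ^ 2) / 2 = q.1
    rw [hKt]; ring
  · show ((1 - lam) ^ 2 * c + Kc w lam c / t ^ 2) / 2 = q.2
    rw [hKdiv]; ring

include hw hlam hw0 in
lemma density_identity (p : ℝ × ℝ) (hc : 0 < p.1) :
    |(Bmat w lam p).det| *
      ((2 / Real.pi) * Real.exp (-((psiMap w lam p).1 + (psiMap w lam p).2 - w)) *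
        (Real.sqrt (4 * (psiMap w lam p).1 * (psiMap w lam p).2 - w ^ 2))⁻¹) =
    ((Real.sqrt (2 * Real.pi))⁻¹ * (Real.sqrt p.1)⁻¹ * Real.exp (-(p.1 / 2))) *
      (Real.sqrt ((w + lam * (1 - lam) * p.1) / (2 * Real.pi)) *
        Real.exp (-((w + lam * (1 - lam) * p.1) * p.2 ^ 2 / 2)) *
        (1 - (2 * lam - 1) * p.2 / Real.sqrt (p.2 ^ 2 + 4))) := by
  have ht := sqz_pos p.2
  have hK := Kc_pos hw hlam hw0 (c := p.1) hc
  have ha := a0_pos hlam (sqz p.2) ht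
  have hs4 : (0:ℝ) < Real.sqrt (p.2 ^ 2 + 4) := Real.sqrt_pos.2 (by positivity)
  have hKrfl : w + lam * (1 - lam) * p.1 = Kc w lam p.1 := rfl
  have hexp : (psiMap w lam p).1 + (psiMap w lam p).2 - w
      = p.1 / 2 + Kc w lam p.1 * p.2 ^ 2 / 2 := by
    have hu : sqz p.2 - 1 / sqz p.2 = p.2 := sqz_sub_inv p.2
    conv_rhs => rw [← hu]
    simp only [psiMap, Kc]
    field_simp
    ring
  rw [hKrfl, Bmat_det, abs_neg,
    abs_of_pos (div_pos (mul_pos hK (pow_pos ha 2)) (by positivity)),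
    num_eq, Real.sqrt_mul hc.le, Real.sqrt_mul hK.le, Real.sqrt_sq ha.le,
    hexp, show -(p.1 / 2 + Kc w lam p.1 * p.2 ^ 2 / 2)
      = -(p.1 / 2) + -(Kc w lam p.1 * p.2 ^ 2 / 2) from by ring,
    Real.exp_add, Real.sqrt_div hK.le, sqrt_u_sq_add_four]
  -- replace p.2 by t - 1/t
  set t := sqz p.2 with htdef
  have hu : t - 1 / t = p.2 := sqz_sub_inv p.2
  clear_value t
  rw [← hu]
  -- abstract square roots
  set sp := Real.sqrt (2 * Real.pi) with hspdef
  have hsp2 : sp * sp = 2 * Real.pi := Real.mul_self_sqrt (by positivity)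
  have hsp : 0 < sp := Real.sqrt_pos.2 (by positivity)
  clear_value sp
  set sK := Real.sqrt (Kc w lam p.1) with hsKdef
  have hsK2 : sK * sK = Kc w lam p.1 := Real.mul_self_sqrt hK.le
  have hsK : 0 < sK := Real.sqrt_pos.2 hK
  clear_value sK
  set sc := Real.sqrt p.1 with hscdef
  have hsc : 0 < sc := Real.sqrt_pos.2 hc
  clear_value sc
  have hpi : Real.pi = sp * sp / 2 := by rw [hsp2]; ring
  rw [hpi, ← hsK2]
  have hE1 : Real.exp (-(p.1 / 2)) ≠ 0 := Real.exp_ne_zero _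
  have hE2 : Real.exp (-(sK * sK * (t - 1/t) ^ 2 / 2)) ≠ 0 := Real.exp_ne_zero _
  have ht1 : (0:ℝ) < t + 1 / t := by positivity
  have htail : 1 - (2 * lam - 1) * (t - 1 / t) / (t + 1 / t)
      = 2 * (lam / t + (1 - lam) * t) / (t + 1 / t) := by
    field_simp
    ring
  rw [htail]
  set A := lam / t + (1 - lam) * t with hAdef
  clear_value A
  have h2 : (t:ℝ) ^ 2 + 1 ≠ 0 := by positivity
  field_simp

end Main

lemma withDensity_map_comm {α β : Type*} [MeasurableSpace α] [MeasurableSpace β]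
    (μ : Measure α) {f : α → β} (hf : Measurable f) {g : β → ℝ≥0∞} (hg : Measurable g) :
    (μ.map f).withDensity g = (μ.withDensity (g ∘ f)).map f := by
  ext s hs
  rw [withDensity_apply _ hs, Measure.map_apply hf hs, withDensity_apply _ (hf hs),
    setLIntegral_map hs hg hf]
  rfl

lemma continuous_sqz : Continuous sqz := by
  unfold sqz
  exact (continuous_id.add (((continuous_pow 2).add continuous_const).sqrt)).div_const 2

lemma continuous_psiMap (w lam : ℝ) : Continuous (psiMap w lam) :=
  continuous_iff_continuousAt.2 fun p => (hasFDerivAt_psiMap w lam p).continuousAt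

lemma measurable_phiMap (w lam : ℝ) : Measurable (phiMap w lam) := by
  unfold phiMap
  fun_prop

/-- joint law of (γ, U) under ν_2^{W,0} with W = [[0,w],[w,0]],
where U = √Z − 1/√Z.  Conditionally on γ = c, U has the tilted Gaussian law
Ñ(w + λ(1−λ)c, −(2λ−1)). -/
theorem stmt9 (w lam : ℝ) (hw : 0 ≤ w) (hlam : lam ∈ Set.Icc (0 : ℝ) 1)
    (hw0 : w = 0 → lam ≠ 0 ∧ lam ≠ 1) :
    (let gam : (Fin 2 → ℝ) → ℝ := fun β =>
       (4 * β 0 * β 1 - w ^ 2) /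
         (2 * w * lam * (1 - lam) + 2 * β 1 * lam ^ 2 + 2 * β 0 * (1 - lam) ^ 2)
     let Z : (Fin 2 → ℝ) → ℝ := fun β =>
       (2 * β 0 - lam ^ 2 * gam β) / (w + lam * (1 - lam) * gam β)
     let U : (Fin 2 → ℝ) → ℝ := fun β =>
       Real.sqrt (Z β) - 1 / Real.sqrt (Z β)
     (nuMeasure !![0, w; w, 0] 0).map (fun β => (gam β, U β)) =
       MeasureTheory.volume.withDensity (fun p : ℝ × ℝ => ENNReal.ofReal
         (if 0 < p.1 then
           ((Real.sqrt (2 * Real.pi))⁻¹ * (Real.sqrt p.1)⁻¹ *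
              Real.exp (-(p.1 / 2))) *
           (Real.sqrt ((w + lam * (1 - lam) * p.1) / (2 * Real.pi)) *
              Real.exp (-((w + lam * (1 - lam) * p.1) * p.2 ^ 2 / 2)) *
              (1 - (2 * lam - 1) * p.2 / Real.sqrt (p.2 ^ 2 + 4)))
         else 0))) := by
  dsimp only
  -- identify the map with phiMap ∘ finTwoArrow
  have hmap_eq : (fun β : Fin 2 → ℝ =>
      ((4 * β 0 * β 1 - w ^ 2) /
         (2 * w * lam * (1 - lam) + 2 * β 1 * lam ^ 2 + 2 * β 0 * (1 - lam) ^ 2),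
       Real.sqrt ((2 * β 0 - lam ^ 2 * ((4 * β 0 * β 1 - w ^ 2) /
         (2 * w * lam * (1 - lam) + 2 * β 1 * lam ^ 2 + 2 * β 0 * (1 - lam) ^ 2))) /
         (w + lam * (1 - lam) * ((4 * β 0 * β 1 - w ^ 2) /
         (2 * w * lam * (1 - lam) + 2 * β 1 * lam ^ 2 + 2 * β 0 * (1 - lam) ^ 2)))) -
       1 / Real.sqrt ((2 * β 0 - lam ^ 2 * ((4 * β 0 * β 1 - w ^ 2) /
         (2 * w * lam * (1 - lam) + 2 * β 1 * lam ^ 2 + 2 * β 0 * (1 - lam) ^ 2))) /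
         (w + lam * (1 - lam) * ((4 * β 0 * β 1 - w ^ 2) /
         (2 * w * lam * (1 - lam) + 2 * β 1 * lam ^ 2 + 2 * β 0 * (1 - lam) ^ 2))))))
      = phiMap w lam ∘ (MeasurableEquiv.finTwoArrow : (Fin 2 → ℝ) ≃ᵐ ℝ × ℝ) := rfl
  rw [hmap_eq]
  set e : (Fin 2 → ℝ) ≃ᵐ ℝ × ℝ := MeasurableEquiv.finTwoArrow with hedef
  set Sset : Set (ℝ × ℝ) := {q | 0 < q.1 ∧ w ^ 2 < 4 * q.1 * q.2} with hSdef
  set Tset : Set (ℝ × ℝ) := {p : ℝ × ℝ | 0 < p.1} with hTdef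
  have hTmeas : MeasurableSet Tset := measurableSet_lt measurable_const measurable_fst
  have hSmeas : MeasurableSet Sset := by
    have : Sset = {q : ℝ × ℝ | 0 < q.1} ∩ {q : ℝ × ℝ | w ^ 2 < 4 * q.1 * q.2} := rfl
    rw [this]
    exact (measurableSet_lt measurable_const measurable_fst).inter
      (measurableSet_lt measurable_const (by fun_prop))
  set gDens : ℝ × ℝ → ℝ≥0∞ := fun q => ENNReal.ofReal
    ((2 / Real.pi) * Real.exp (-(q.1 + q.2 - w)) * (Real.sqrt (4 * q.1 * q.2 - w ^ 2))⁻¹)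
    with hgdef
  have hgmeas : Measurable gDens := by
    rw [hgdef]
    fun_prop
  have hfun : (fun q : ℝ × ℝ => ENNReal.ofReal (nuDensity !![0, w; w, 0] 0 (e.symm q)))
      = Sset.indicator gDens := by
    funext q
    have h0 : (e.symm q) 0 = q.1 := by simp [hedef]
    have h1 : (e.symm q) 1 = q.2 := by simp [hedef]
    rw [nuDensity_eq, h0, h1]
    by_cases hq : q ∈ Sset
    · rw [if_pos (show 0 < q.1 ∧ w ^ 2 < 4 * q.1 * q.2 from hq), Set.indicator_of_mem hq]
    · rw [if_neg (show ¬(0 < q.1 ∧ w ^ 2 < 4 * q.1 * q.2) from hq),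
        Set.indicator_of_notMem hq, ENNReal.ofReal_zero]
  have hA : (nuMeasure !![0, w; w, 0] 0).map e = volume.withDensity
      (fun q => ENNReal.ofReal (nuDensity !![0, w; w, 0] 0 (e.symm q))) := by
    have hmeas : Measurable fun q : ℝ × ℝ =>
        ENNReal.ofReal (nuDensity !![0, w; w, 0] 0 (e.symm q)) := by
      rw [hfun]; exact hgmeas.indicator hSmeas
    rw [nuMeasure,
      show (fun β : Fin 2 → ℝ => ENNReal.ofReal (nuDensity !![0, w; w, 0] 0 β))
        = (fun q : ℝ × ℝ => ENNReal.ofReal (nuDensity !![0, w; w, 0] 0 (e.symm q))) ∘ e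
        from funext fun β => by rw [Function.comp_apply, e.symm_apply_apply],
      ← withDensity_map_comm volume e.measurable hmeas,
      (MeasureTheory.volume_preserving_finTwoArrow ℝ).map_eq]
  have hψmeas : Measurable (psiMap w lam) := (continuous_psiMap w lam).measurable
  have hInj : Set.InjOn (psiMap w lam) Tset := fun p hp p' hp' h => by
    have h1 := phi_psi hw hlam hw0 p hp
    have h2 := phi_psi hw hlam hw0 p' hp'
    rw [← h1, ← h2, h]
  have hImg : psiMap w lam '' Tset = Sset := by
    ext q
    constructor
    · rintro ⟨p, hp, rfl⟩
      exact psi_mem_S hw hlam hw0 p hp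
    · intro hq
      obtain ⟨p, hp, hpq⟩ := psi_surj hw hlam hw0 q hq
      exact ⟨p, hp, hpq⟩
  have hJmeas : Measurable fun p : ℝ × ℝ => ENNReal.ofReal |(Bmat w lam p).det| := by
    have hB : (fun p : ℝ × ℝ => ENNReal.ofReal |(Bmat w lam p).det|)
        = fun p => ENNReal.ofReal |-(Kc w lam p.1 *
            (lam / sqz p.2 + (1 - lam) * sqz p.2) ^ 2 / (2 * Real.sqrt (p.2 ^ 2 + 4)))| := by
      funext p; rw [Bmat_det]
    rw [hB]
    have hcz := continuous_sqz
    unfold Kc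
    fun_prop
  have hCoV := map_withDensity_abs_det_fderiv_eq_addHaar volume hTmeas.nullMeasurableSet
    (fun x _ => (hasFDerivAt_psiMap w lam x).hasFDerivWithinAt) hInj
  rw [hImg] at hCoV
  rw [← Measure.map_map (measurable_phiMap w lam) e.measurable, hA, hfun,
    withDensity_indicator hSmeas, ← hCoV,
    withDensity_map_comm _ hψmeas hgmeas,
    Measure.map_map (measurable_phiMap w lam) hψmeas,
    ← withDensity_mul _ hJmeas (hgmeas.comp hψmeas)]
  have hae : phiMap w lam ∘ psiMap w lam
      =ᵐ[(volume.restrict Tset).withDensity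
          ((fun x => ENNReal.ofReal |(Bmat w lam x).det|) * (gDens ∘ psiMap w lam))] id :=
    (withDensity_absolutelyContinuous _ _).ae_eq
      ((ae_restrict_iff' hTmeas).2 (ae_of_all _ fun p hp => phi_psi hw hlam hw0 p hp))
  rw [Measure.map_congr hae, Measure.map_id]
  have htarget : (fun p : ℝ × ℝ => ENNReal.ofReal
      (if 0 < p.1 then
        ((Real.sqrt (2 * Real.pi))⁻¹ * (Real.sqrt p.1)⁻¹ * Real.exp (-(p.1 / 2))) *
        (Real.sqrt ((w + lam * (1 - lam) * p.1) / (2 * Real.pi)) *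
          Real.exp (-((w + lam * (1 - lam) * p.1) * p.2 ^ 2 / 2)) *
          (1 - (2 * lam - 1) * p.2 / Real.sqrt (p.2 ^ 2 + 4)))
       else 0))
      = Tset.indicator (fun p : ℝ × ℝ => ENNReal.ofReal
        (((Real.sqrt (2 * Real.pi))⁻¹ * (Real.sqrt p.1)⁻¹ * Real.exp (-(p.1 / 2))) *
        (Real.sqrt ((w + lam * (1 - lam) * p.1) / (2 * Real.pi)) *
          Real.exp (-((w + lam * (1 - lam) * p.1) * p.2 ^ 2 / 2)) *
          (1 - (2 * lam - 1) * p.2 / Real.sqrt (p.2 ^ 2 + 4))))) := by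
    funext p
    by_cases hp : p ∈ Tset
    · rw [Set.indicator_of_mem hp, if_pos (show 0 < p.1 from hp)]
    · rw [Set.indicator_of_notMem hp, if_neg (show ¬ (0 < p.1) from hp), ENNReal.ofReal_zero]
  rw [htarget, withDensity_indicator hTmeas]
  apply withDensity_congr_ae
  refine (ae_restrict_iff' hTmeas).2 (ae_of_all _ fun p hp => ?_)
  rw [Pi.mul_apply, Function.comp_apply, hgdef,
    ← ENNReal.ofReal_mul (abs_nonneg _)]
  exact congrArg ENNReal.ofReal (density_identity hw hlam hw0 p hp)
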